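/- If X is a nonzero invariant subspace of a trace-preserving completely positive map E on a finite-dimensional Hilbert space, then there exists a fixed point state ρ_X of E with supp(ρ_X) ⊆ X. -/

import Mathlib

/-! The density matrices supported in `X` form a compact convex set, nonempty since it contains
`|v⟩⟨v|` for a unit vector `v ∈ X`. The Kraus map preserves it: positivity holds for any Kraus
map, the trace is kept because `∑ Eᵢ† Eᵢ = 1`, and the support stays in `X` because `Eᵢ X ⊆ X`.
A continuous linear map preserving a compact convex set has a fixed point in it: the Cesàro
averages of an orbit stay in the set and `f` moves the `n`-th one by `(fⁿ x - x) / n → 0`, so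
any limit point of them is fixed. -/

open Matrix Filter Topology
open scoped ComplexOrder

noncomputable def projMat {d : ℕ} (X : Submodule ℂ (EuclideanSpace ℂ (Fin d))) :
    Matrix (Fin d) (Fin d) ℂ :=
  Matrix.toEuclideanLin.symm ((X.subtypeL.comp (Submodule.orthogonalProjection X)).toLinearMap)

/-- The support of an operator: the range of the associated linear map. -/
noncomputable def matSupp {d : ℕ} (A : Matrix (Fin d) (Fin d) ℂ) :
    Submodule ℂ (EuclideanSpace ℂ (Fin d)) :=
  LinearMap.range (Matrix.toEuclideanLin A)

/-- The outer product `|v⟩⟨v|`. -/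
noncomputable def outer {d : ℕ} (v : EuclideanSpace ℂ (Fin d)) : Matrix (Fin d) (Fin d) ℂ :=
  fun i j => v i * star (v j)

noncomputable def krausMap {d m : ℕ} (E : Fin m → Matrix (Fin d) (Fin d) ℂ)
    (A : Matrix (Fin d) (Fin d) ℂ) : Matrix (Fin d) (Fin d) ℂ :=
  ∑ i, E i * A * (E i)ᴴ

open Function Set

theorem birkhoffSum_apply_eq_comp {α M : Type*} [AddCommMonoid M] (f : α → α) (g : α → M)
    (n : ℕ) (x : α) : birkhoffSum f g n (f x) = birkhoffSum f (g ∘ f) n x := by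
  simp only [birkhoffSum, Function.comp_apply, ← iterate_succ_apply, iterate_succ_apply']

theorem Convex.birkhoffAverage_mem {𝕜 E α : Type*} [Field 𝕜] [LinearOrder 𝕜]
    [IsStrictOrderedRing 𝕜] [AddCommGroup E] [Module 𝕜 E] {s : Set E} (hs : Convex 𝕜 s)
    {f : α → α} {g : α → E} {x : α} {n : ℕ} (hn : n ≠ 0) (hg : ∀ k < n, g (f^[k] x) ∈ s) :
    birkhoffAverage 𝕜 f g n x ∈ s := by
  rw [birkhoffAverage, birkhoffSum, Finset.smul_sum]
  refine hs.sum_mem (fun _ _ => by positivity) ?_ fun k hk => hg k (Finset.mem_range.1 hk)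
  simp [hn]

/-- The Markov–Kakutani theorem for a single map. -/
theorem ContinuousLinearMap.exists_fixedPt_of_mapsTo_of_isCompact_of_convex
    {E : Type*} [NormedAddCommGroup E] [NormedSpace ℝ E] (f : E →L[ℝ] E) {K : Set E}
    (hKc : IsCompact K) (hKcv : Convex ℝ K) (hKne : K.Nonempty) (hfK : MapsTo f K K) :
    ∃ x ∈ K, IsFixedPt f x := by
  obtain ⟨x₀, hx₀⟩ := hKne
  set a : ℕ → E := fun n => birkhoffAverage ℝ f id (n + 1) x₀ with ha
  have hmem : ∀ n, a n ∈ K := fun n =>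
    hKcv.birkhoffAverage_mem n.succ_ne_zero fun k _ => hfK.iterate k hx₀
  have hf_a : ∀ n, f (a n) = birkhoffAverage ℝ f id (n + 1) (f x₀) := fun n => by
    rw [ha, map_birkhoffAverage ℝ ℝ f, birkhoffAverage, birkhoffAverage, birkhoffSum_apply_eq_comp]
    rfl
  have hdiff : Tendsto (fun n => f (a n) - a n) atTop (𝓝 0) := by
    have hb : Bornology.IsBounded (range fun k => id (f^[k] x₀)) :=
      hKc.isBounded.subset (range_subset_iff.2 fun k => hfK.iterate k hx₀)
    refine ((tendsto_birkhoffAverage_apply_sub_birkhoffAverage ℝ hb).comp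
      (tendsto_add_atTop_nat 1)).congr fun n => by rw [hf_a]; rfl
  obtain ⟨y, hyK, φ, hφ, hlim⟩ := hKc.tendsto_subseq hmem
  refine ⟨y, hyK, tendsto_nhds_unique ((f.continuous.tendsto y).comp hlim) ?_⟩
  simpa [comp_def] using hlim.add (hdiff.comp hφ.tendsto_atTop)

namespace Matrix

variable {n 𝕜 : Type*} [RCLike 𝕜]

theorem PosSemidef.norm_apply_sq_le {A : Matrix n n 𝕜} (hA : A.PosSemidef) (i j : n) :
    ‖A i j‖ ^ 2 ≤ RCLike.re (A i i) * RCLike.re (A j j) := by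
  have hdet := (hA.submatrix ![i, j]).det_nonneg
  rw [det_fin_two] at hdet
  simp only [submatrix_apply, Matrix.cons_val_zero, Matrix.cons_val_one] at hdet
  have him : ∀ k, RCLike.im (A k k) = 0 := fun k => (RCLike.nonneg_iff.1 hA.diag_nonneg).2
  rw [← hA.1.apply i j, RCLike.star_def, RCLike.conj_mul] at hdet
  have hre := (RCLike.nonneg_iff.1 hdet).1
  simp only [map_sub, RCLike.mul_re, him, mul_zero, sub_zero, ← RCLike.ofReal_pow,
    RCLike.ofReal_re] at hre
  rw [← hA.1.apply i j, norm_star]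
  linarith

theorem PosSemidef.norm_apply_le_re_trace [Fintype n] {A : Matrix n n 𝕜} (hA : A.PosSemidef)
    (i j : n) : ‖A i j‖ ≤ RCLike.re A.trace := by
  have hdiag : ∀ k, 0 ≤ RCLike.re (A k k) := fun k => (RCLike.nonneg_iff.1 hA.diag_nonneg).1
  have hle : ∀ k, RCLike.re (A k k) ≤ RCLike.re A.trace := fun k => by
    rw [trace, map_sum]
    exact Finset.single_le_sum (f := fun k => RCLike.re (A k k)) (fun k _ => hdiag k)
      (Finset.mem_univ k)
  refine (pow_le_pow_iff_left₀ (norm_nonneg _) ((hdiag i).trans (hle i)) two_ne_zero).1 ?_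
  calc ‖A i j‖ ^ 2 ≤ RCLike.re (A i i) * RCLike.re (A j j) := hA.norm_apply_sq_le i j
    _ ≤ RCLike.re A.trace ^ 2 := by
      rw [sq]; exact mul_le_mul (hle i) (hle j) (hdiag j) ((hdiag i).trans (hle i))

theorem isClosed_setOf_posSemidef [Fintype n] : IsClosed {A : Matrix n n 𝕜 | A.PosSemidef} := by
  simp only [posSemidef_iff_dotProduct_mulVec, Set.ofPred_and, Set.ofPred_forall]
  exact (isClosed_eq continuous_id.matrix_conjTranspose continuous_id).inter <|
    isClosed_iInter fun x => isClosed_le continuous_const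
      (continuous_const.dotProduct (continuous_id.matrix_mulVec continuous_const))

theorem convex_setOf_posSemidef : Convex ℝ {A : Matrix n n 𝕜 | A.PosSemidef} :=
  fun _ hA _ hB _ _ ha hb _ => (hA.smul ha).add (hB.smul hb)

end Matrix

section Kraus

variable {d m : ℕ} (E : Fin m → Matrix (Fin d) (Fin d) ℂ)

noncomputable def krausLinearMap : Matrix (Fin d) (Fin d) ℂ →ₗ[ℂ] Matrix (Fin d) (Fin d) ℂ where
  toFun := krausMap E
  map_add' A B := by simp only [krausMap, Matrix.mul_add, Matrix.add_mul, Finset.sum_add_distrib]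
  map_smul' c A := by
    simp only [krausMap, Matrix.mul_smul, Matrix.smul_mul, Finset.smul_sum, RingHom.id_apply]

theorem krausMap_posSemidef {A : Matrix (Fin d) (Fin d) ℂ} (hA : A.PosSemidef) :
    (krausMap E A).PosSemidef :=
  Matrix.posSemidef_sum _ fun i _ => hA.mul_mul_conjTranspose_same (E i)

theorem trace_krausMap (hE : ∑ i, (E i)ᴴ * E i = 1) (A : Matrix (Fin d) (Fin d) ℂ) :
    (krausMap E A).trace = A.trace := by
  rw [krausMap, trace_sum]
  simp_rw [trace_mul_cycle (E _)]
  rw [← trace_sum, ← Finset.sum_mul, hE, one_mul]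

theorem matSupp_krausMap_le {X : Submodule ℂ (EuclideanSpace ℂ (Fin d))}
    (hinv : ∀ i, ∀ v, v ∈ X → toEuclideanLin (E i) v ∈ X) {A : Matrix (Fin d) (Fin d) ℂ}
    (hA : matSupp A ≤ X) : matSupp (krausMap E A) ≤ X := by
  rintro _ ⟨v, rfl⟩
  simp only [krausMap, map_sum, LinearMap.sum_apply]
  refine X.sum_mem fun i _ => ?_
  simp only [toLpLin_mul_same, LinearMap.comp_apply]
  exact hinv i _ (hA ⟨_, rfl⟩)

end Kraus

section States

variable {d : ℕ}

theorem matSupp_le_iff {A : Matrix (Fin d) (Fin d) ℂ} {X : Submodule ℂ (EuclideanSpace ℂ (Fin d))} :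
    matSupp A ≤ X ↔ ∀ v, toEuclideanLin A v ∈ X :=
  ⟨fun h v => h ⟨v, rfl⟩, by rintro h _ ⟨v, rfl⟩; exact h v⟩

def statesSupportedIn (X : Submodule ℂ (EuclideanSpace ℂ (Fin d))) :
    Set (Matrix (Fin d) (Fin d) ℂ) :=
  {ρ | ρ.PosSemidef ∧ ρ.trace = 1 ∧ matSupp ρ ≤ X}

variable (X : Submodule ℂ (EuclideanSpace ℂ (Fin d)))

theorem isClosed_setOf_matSupp_le : IsClosed {A : Matrix (Fin d) (Fin d) ℂ | matSupp A ≤ X} := by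
  simp only [matSupp_le_iff, Set.ofPred_forall]
  exact isClosed_iInter fun v => X.closed_of_finiteDimensional.preimage <|
    (PiLp.continuous_toLp 2 _).comp (continuous_id.matrix_mulVec continuous_const)

theorem convex_setOf_matSupp_le : Convex ℝ {A : Matrix (Fin d) (Fin d) ℂ | matSupp A ≤ X} := by
  intro A hA B hB a b _ _ _
  simp only [Set.mem_ofPred_eq, matSupp_le_iff] at hA hB ⊢
  intro v
  rw [map_add, LinearMap.add_apply, ← Complex.coe_smul, ← Complex.coe_smul, map_smul, map_smul,
    LinearMap.smul_apply, LinearMap.smul_apply, Complex.coe_smul, Complex.coe_smul]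
  exact X.add_mem (X.smul_of_tower_mem a (hA v)) (X.smul_of_tower_mem b (hB v))

theorem convex_statesSupportedIn : Convex ℝ (statesSupportedIn X) :=
  convex_setOf_posSemidef.inter <|
    ((convex_singleton 1).linear_preimage ((traceLinearMap _ ℂ ℂ).restrictScalars ℝ)).inter
      (convex_setOf_matSupp_le X)

attribute [local instance] Matrix.normedAddCommGroup Matrix.normedSpace

theorem isCompact_statesSupportedIn : IsCompact (statesSupportedIn X) := by
  refine Metric.isCompact_of_isClosed_isBounded
    (isClosed_setOf_posSemidef.inter ((isClosed_eq continuous_id.matrix_trace continuous_const).inter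
      (isClosed_setOf_matSupp_le X))) ?_
  refine isBounded_iff_forall_norm_le.2 ⟨1, fun ρ ⟨hρ, htr, _⟩ => (norm_le_iff zero_le_one).2 ?_⟩
  simpa [htr] using hρ.norm_apply_le_re_trace

theorem statesSupportedIn_nonempty (hX : X ≠ ⊥) : (statesSupportedIn X).Nonempty := by
  have := Submodule.nontrivial_iff_ne_bot.2 hX
  obtain ⟨⟨u, huX⟩, hu⟩ := exists_norm_eq X zero_le_one
  refine ⟨outer u, posSemidef_vecMulVec_self_star _, ?_, ?_⟩
  · change (vecMulVec (WithLp.ofLp u) (star (WithLp.ofLp u))).trace = 1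
    rw [trace_vecMulVec, ← EuclideanSpace.inner_eq_star_dotProduct, inner_self_eq_norm_sq_to_K,
      show ‖u‖ = 1 from hu]
    norm_num
  · refine matSupp_le_iff.2 fun w => ?_
    change WithLp.toLp 2 (vecMulVec (WithLp.ofLp u) (star (WithLp.ofLp u)) *ᵥ WithLp.ofLp w) ∈ X
    rw [vecMulVec_mulVec, op_smul_eq_smul, WithLp.toLp_smul]
    exact X.smul_mem _ huX

theorem mapsTo_krausMap_statesSupportedIn {m : ℕ} (E : Fin m → Matrix (Fin d) (Fin d) ℂ)
    (hE : ∑ i, (E i)ᴴ * E i = 1) (hinv : ∀ i, ∀ v, v ∈ X → toEuclideanLin (E i) v ∈ X) :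
    MapsTo (krausMap E) (statesSupportedIn X) (statesSupportedIn X) :=
  fun ρ ⟨hpsd, htr, hsupp⟩ => ⟨krausMap_posSemidef E hpsd, (trace_krausMap E hE ρ).trans htr,
    matSupp_krausMap_le E hinv hsupp⟩

theorem exists_mem_statesSupportedIn_krausMap_eq {m : ℕ} (E : Fin m → Matrix (Fin d) (Fin d) ℂ)
    (hE : ∑ i, (E i)ᴴ * E i = 1) (hX : X ≠ ⊥)
    (hinv : ∀ i, ∀ v, v ∈ X → toEuclideanLin (E i) v ∈ X) :
    ∃ ρ ∈ statesSupportedIn X, krausMap E ρ = ρ :=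
  ContinuousLinearMap.exists_fixedPt_of_mapsTo_of_isCompact_of_convex
    ((krausLinearMap E).restrictScalars ℝ).toContinuousLinearMap (isCompact_statesSupportedIn X) (convex_statesSupportedIn X) (statesSupportedIn_nonempty X hX)
    (mapsTo_krausMap_statesSupportedIn X E hE hinv)

end States

/-- Every nonzero invariant subspace contains the support of some fixed point state. -/
theorem stmt7 {d m : ℕ} (E : Fin m → Matrix (Fin d) (Fin d) ℂ)
    (hE : ∑ i, (E i)ᴴ * E i = 1)
    (X : Submodule ℂ (EuclideanSpace ℂ (Fin d))) (hX : X ≠ ⊥)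
    (hinv : ∀ i : Fin m, ∀ v : EuclideanSpace ℂ (Fin d), v ∈ X → Matrix.toEuclideanLin (E i) v ∈ X) :
    ∃ ρ : Matrix (Fin d) (Fin d) ℂ, ρ.PosSemidef ∧ ρ ≠ 0 ∧ ρ.trace ≤ 1 ∧ krausMap E ρ = ρ ∧ matSupp ρ ≤ X := by
  obtain ⟨ρ, ⟨hpsd, htr, hsupp⟩, hfix⟩ := exists_mem_statesSupportedIn_krausMap_eq X E hE hX hinv
  refine ⟨ρ, hpsd, ?_, htr.le, hfix, hsupp⟩
  rintro rfl
  simp at htr
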